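/- For the on-off channel, the capacity with causal transmitter side information is upper bounded by p_on·C_Sm(√E): C ≤ p_on·C_Sm(√E). -/

import Mathlib

open MeasureTheory Real Set

/-- The standard Gaussian density. -/
noncomputable def φ (x : ℝ) : ℝ := (Real.sqrt (2 * π))⁻¹ * Real.exp (-x ^ 2 / 2)

/-- Mutual information of an input measure `μ` through the channel with conditional
output density `g y t`. -/
noncomputable def MI (μ : Measure ℝ) (g : ℝ → ℝ → ℝ) : ℝ :=
  ∫ t, (∫ y : ℝ, g y t * Real.log (g y t / ∫ s, g y s ∂μ)) ∂μ

/-- Smith's amplitude-constrained AWGN capacity under amplitude constraint `a`. -/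
noncomputable def CSm (a : ℝ) : ℝ :=
  sSup {x : ℝ | ∃ F : Measure ℝ, IsProbabilityMeasure F ∧ F (Icc (-a) a) = 1 ∧
    x = MI F (fun y t => φ (y - t))}

/-!
The on-off conditional density `(1 - p) φ y + p φ (y - t)` and the output density
`(1 - p) φ y + p ∫ φ (y - s) dF(s)` share the off-state term `(1 - p) φ y`. The two-term
log-sum inequality therefore bounds the information integrand, pointwise in `(t, y)`, by `p`
times that of the Gaussian channel, so `I_F ≤ p · I_F(Gauss) ≤ p · C_Sm(√E)`.
The rest is integrability: for inputs in `[-a, a]` every density involved lies between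
`φ (|y| + a)` and `c · exp (a² - y² / 4)`, so the integrands are dominated by
`c · exp (a² - y² / 4) (y² + 2 a²)`.
-/

noncomputable def gaussEnvelope (a y : ℝ) : ℝ := (√(2 * π))⁻¹ * exp (a ^ 2 - y ^ 2 / 4)

lemma phi_pos (x : ℝ) : 0 < φ x := by unfold φ; positivity

lemma continuous_phi : Continuous φ := by unfold φ; fun_prop

lemma log_phi (x : ℝ) : log (φ x) = log (√(2 * π))⁻¹ - x ^ 2 / 2 := by
  rw [φ, log_mul (by positivity) (exp_ne_zero _), log_exp]; ring

lemma log_gaussEnvelope (a y : ℝ) :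
    log (gaussEnvelope a y) = log (√(2 * π))⁻¹ + (a ^ 2 - y ^ 2 / 4) := by
  rw [gaussEnvelope, log_mul (by positivity) (exp_ne_zero _), log_exp]

lemma phi_mem_Icc {a y t : ℝ} (ht : t ∈ Icc (-a) a) :
    φ (y - t) ∈ Icc (φ (|y| + a)) (gaussEnvelope a y) := by
  have ht' : |t| ≤ a := abs_le.2 ht
  have hyt : |y - t| ≤ |y| + a := (abs_sub _ _).trans (by linarith)
  constructor
  · refine mul_le_mul_of_nonneg_left (exp_le_exp.2 ?_) (by positivity)
    have := sq_le_sq' (by linarith [abs_nonneg (y - t)]) hyt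
    rw [sq_abs] at this
    linarith
  · refine mul_le_mul_of_nonneg_left (exp_le_exp.2 ?_) (by positivity)
    -- `y ^ 2 ≤ 2 (y - t) ^ 2 + 2 t ^ 2`
    nlinarith [sq_nonneg (y - 2 * t), sq_abs t, sq_le_sq' (by linarith [abs_nonneg t]) ht']

lemma integrable_gaussEnvelope_mul (a : ℝ) :
    Integrable (fun y => gaussEnvelope a y * (y ^ 2 + 2 * a ^ 2)) := by
  have h2 : Integrable (fun y : ℝ => y ^ (2 : ℝ) * exp (-(1 / 4) * y ^ 2)) :=
    integrable_rpow_mul_exp_neg_mul_sq (by norm_num) (by norm_num)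
  have h0 : Integrable (fun y : ℝ => exp (-(1 / 4) * y ^ 2)) :=
    integrable_exp_neg_mul_sq (by norm_num)
  refine ((h2.const_mul ((√(2 * π))⁻¹ * exp (a ^ 2))).add
    (h0.const_mul ((√(2 * π))⁻¹ * exp (a ^ 2) * (2 * a ^ 2)))).congr (.of_forall fun y => ?_)
  simp only [Pi.add_apply, gaussEnvelope, sub_eq_add_neg, exp_add, rpow_two]
  ring_nf

lemma abs_log_div_le {a y u v : ℝ} (hu : u ∈ Icc (φ (|y| + a)) (gaussEnvelope a y))
    (hv : v ∈ Icc (φ (|y| + a)) (gaussEnvelope a y)) :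
    |log (u / v)| ≤ y ^ 2 + 2 * a ^ 2 := by
  have hlow := phi_pos (|y| + a)
  have bounds : ∀ w ∈ Icc (φ (|y| + a)) (gaussEnvelope a y),
      log (√(2 * π))⁻¹ - (|y| + a) ^ 2 / 2 ≤ log w ∧
        log w ≤ log (√(2 * π))⁻¹ + (a ^ 2 - y ^ 2 / 4) := fun w hw =>
    ⟨log_phi (|y| + a) ▸ log_le_log hlow hw.1,
      log_gaussEnvelope a y ▸ log_le_log (hlow.trans_le hw.1) hw.2⟩
  obtain ⟨hu₁, hu₂⟩ := bounds u hu
  obtain ⟨hv₁, hv₂⟩ := bounds v hv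
  have hsq : (|y| + a) ^ 2 ≤ 2 * y ^ 2 + 2 * a ^ 2 := by
    nlinarith [sq_abs y, sq_nonneg (|y| - a)]
  rw [log_div (hlow.trans_le hu.1).ne' (hlow.trans_le hv.1).ne', abs_le]
  constructor <;> nlinarith [sq_nonneg y]

lemma abs_mul_log_div_le {a y u v : ℝ} (hu : u ∈ Icc (φ (|y| + a)) (gaussEnvelope a y))
    (hv : v ∈ Icc (φ (|y| + a)) (gaussEnvelope a y)) :
    |u * log (u / v)| ≤ gaussEnvelope a y * (y ^ 2 + 2 * a ^ 2) := by
  rw [abs_mul, abs_of_pos ((phi_pos _).trans_le hu.1)]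
  exact mul_le_mul hu.2 (abs_log_div_le hu hv) (abs_nonneg _)
    ((phi_pos _).le.trans (hu.1.trans hu.2))

/-- The log-sum inequality for the pairs `(a, a)` and `(p c, p d)`. -/
lemma add_mul_log_div_add_le {a p c d : ℝ} (ha : 0 ≤ a) (hp : 0 ≤ p) (hc : 0 < c)
    (hd : 0 < d) :
    (a + p * c) * log ((a + p * c) / (a + p * d)) ≤ p * (c * log (c / d)) := by
  rcases hp.eq_or_lt with rfl | hp
  · rcases ha.eq_or_lt with rfl | ha
    · simp
    · simp [div_self ha.ne']
  have hac : 0 < a + p * c := by positivity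
  have had : 0 < a + p * d := by positivity
  have h₁ := log_le_sub_one_of_pos (x := d * (a + p * c) / (c * (a + p * d))) (by positivity)
  have h₂ := one_sub_inv_le_log_of_pos (x := (a + p * d) / (a + p * c)) (by positivity)
  rw [log_div (by positivity) (by positivity), log_mul hd.ne' hac.ne',
    log_mul hc.ne' had.ne'] at h₁
  rw [log_div had.ne' hac.ne', inv_div] at h₂
  rw [log_div hac.ne' had.ne', log_div hc.ne' hd.ne']
  -- `log x ≤ x - 1` bounds each of the two terms; the linear remainders cancel.
  have key : p * c * (d * (a + p * c) / (c * (a + p * d)) - 1)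
      = a * (1 - (a + p * c) / (a + p * d)) := by
    field_simp; ring
  nlinarith [mul_le_mul_of_nonneg_left h₁ (mul_nonneg hp.le hc.le),
    mul_le_mul_of_nonneg_left h₂ ha]

structure IsGaussBounded (a : ℝ) (g : ℝ → ℝ → ℝ) : Prop where
  measurable : Measurable (Function.uncurry g)
  mem_Icc : ∀ y, ∀ t ∈ Icc (-a) a, g y t ∈ Icc (φ (|y| + a)) (gaussEnvelope a y)

namespace IsGaussBounded

variable {a : ℝ}

lemma gauss : IsGaussBounded a (fun y t => φ (y - t)) :=
  ⟨(continuous_phi.comp (continuous_fst.sub continuous_snd)).measurable,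
    fun _ _ ht => phi_mem_Icc ht⟩

lemma noise : IsGaussBounded a (fun y _ => φ y) :=
  ⟨(continuous_phi.comp continuous_fst).measurable, fun y t ht => by
    have ha : 0 ≤ a := by linarith [ht.1, ht.2]
    simpa using phi_mem_Icc (y := y) (t := 0) ⟨neg_nonpos.2 ha, ha⟩⟩

lemma convexComb {g h : ℝ → ℝ → ℝ} (hg : IsGaussBounded a g) (hh : IsGaussBounded a h)
    {p : ℝ} (hp : p ∈ Icc (0 : ℝ) 1) :
    IsGaussBounded a (fun y t => (1 - p) * g y t + p * h y t) :=
  ⟨((measurable_const.mul hg.measurable).add (measurable_const.mul hh.measurable)),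
    fun y t ht => convex_Icc _ _ (hg.mem_Icc y t ht) (hh.mem_Icc y t ht)
      (sub_nonneg.2 hp.2) hp.1 (sub_add_cancel 1 p)⟩

variable {g : ℝ → ℝ → ℝ} {F : Measure ℝ} [IsProbabilityMeasure F]

lemma integrable_kernel (hg : IsGaussBounded a g) (hF : F (Icc (-a) a) = 1) (y : ℝ) :
    Integrable (g y) F := by
  refine Integrable.mono' (integrable_const (gaussEnvelope a y))
    (hg.measurable.comp measurable_prodMk_left).aestronglyMeasurable ?_
  filter_upwards [(mem_ae_iff_prob_eq_one measurableSet_Icc).2 hF] with t ht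
  have hyt := hg.mem_Icc y t ht
  rw [Real.norm_eq_abs, abs_of_pos ((phi_pos _).trans_le hyt.1)]
  exact hyt.2

lemma integral_mem_Icc (hg : IsGaussBounded a g) (hF : F (Icc (-a) a) = 1) (y : ℝ) :
    ∫ s, g y s ∂F ∈ Icc (φ (|y| + a)) (gaussEnvelope a y) :=
  (convex_Icc _ _).integral_mem isClosed_Icc
    (by filter_upwards [(mem_ae_iff_prob_eq_one measurableSet_Icc).2 hF] with s hs
        exact hg.mem_Icc y s hs)
    (hg.integrable_kernel hF y)

lemma measurable_integrand (hg : IsGaussBounded a g) :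
    Measurable (fun q : ℝ × ℝ => g q.2 q.1 * log (g q.2 q.1 / ∫ s, g q.2 s ∂F)) := by
  have hgq : Measurable (fun q : ℝ × ℝ => g q.2 q.1) := hg.measurable.comp measurable_swap
  have hout : Measurable (fun y => ∫ s, g y s ∂F) :=
    hg.measurable.stronglyMeasurable.integral_prod_right'.measurable
  exact hgq.mul ((hgq.div (hout.comp measurable_snd)).log)

lemma integrable_integrand (hg : IsGaussBounded a g) (hF : F (Icc (-a) a) = 1)
    {t : ℝ} (ht : t ∈ Icc (-a) a) :
    Integrable (fun y => g y t * log (g y t / ∫ s, g y s ∂F)) :=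
  (integrable_gaussEnvelope_mul a).mono'
    (hg.measurable_integrand.comp measurable_prodMk_left).aestronglyMeasurable
    (.of_forall fun y => abs_mul_log_div_le (hg.mem_Icc y t ht) (hg.integral_mem_Icc hF y))

lemma abs_information_le (hg : IsGaussBounded a g) (hF : F (Icc (-a) a) = 1)
    {t : ℝ} (ht : t ∈ Icc (-a) a) :
    |∫ y, g y t * log (g y t / ∫ s, g y s ∂F)| ≤
      ∫ y, gaussEnvelope a y * (y ^ 2 + 2 * a ^ 2) :=
  (abs_integral_le_integral_abs).trans <| integral_mono (hg.integrable_integrand hF ht).abs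
    (integrable_gaussEnvelope_mul a)
    fun y => abs_mul_log_div_le (hg.mem_Icc y t ht) (hg.integral_mem_Icc hF y)

lemma integrable_information (hg : IsGaussBounded a g) (hF : F (Icc (-a) a) = 1) :
    Integrable (fun t => ∫ y, g y t * log (g y t / ∫ s, g y s ∂F)) F := by
  refine (integrable_const (∫ y, gaussEnvelope a y * (y ^ 2 + 2 * a ^ 2))).mono'
    hg.measurable_integrand.stronglyMeasurable.integral_prod_right'.aestronglyMeasurable ?_
  filter_upwards [(mem_ae_iff_prob_eq_one measurableSet_Icc).2 hF] with t ht
  exact hg.abs_information_le hF ht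

lemma MI_le (hg : IsGaussBounded a g) (hF : F (Icc (-a) a) = 1) :
    MI F g ≤ ∫ y, gaussEnvelope a y * (y ^ 2 + 2 * a ^ 2) := by
  calc MI F g ≤ ∫ _, (∫ y, gaussEnvelope a y * (y ^ 2 + 2 * a ^ 2)) ∂F := by
        refine integral_mono_ae (hg.integrable_information hF) (integrable_const _) ?_
        filter_upwards [(mem_ae_iff_prob_eq_one measurableSet_Icc).2 hF] with t ht
        exact (le_abs_self _).trans (hg.abs_information_le hF ht)
    _ = ∫ y, gaussEnvelope a y * (y ^ 2 + 2 * a ^ 2) := by simp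

lemma MI_mix_le {n : ℝ → ℝ} (hn : IsGaussBounded a (fun y _ => n y))
    (hg : IsGaussBounded a g) (hF : F (Icc (-a) a) = 1) {p : ℝ} (hp : p ∈ Icc (0 : ℝ) 1) :
    MI F (fun y t => (1 - p) * n y + p * g y t) ≤ p * MI F g := by
  have hmix := hn.convexComb hg hp
  rw [MI, MI, ← integral_const_mul]
  refine integral_mono_ae (hmix.integrable_information hF)
    ((hg.integrable_information hF).const_mul p) ?_
  filter_upwards [(mem_ae_iff_prob_eq_one measurableSet_Icc).2 hF] with t ht
  rw [← integral_const_mul]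
  refine integral_mono (hmix.integrable_integrand hF ht)
    ((hg.integrable_integrand hF ht).const_mul p) fun y => ?_
  have hout : ∫ s, ((1 - p) * n y + p * g y s) ∂F = (1 - p) * n y + p * ∫ s, g y s ∂F := by
    rw [integral_add (integrable_const _) ((hg.integrable_kernel hF y).const_mul p),
      integral_const, probReal_univ, one_smul, integral_const_mul]
  dsimp only
  rw [hout]
  exact add_mul_log_div_add_le
    (mul_nonneg (sub_nonneg.2 hp.2) ((phi_pos _).le.trans (hn.mem_Icc y t ht).1)) hp.1
    ((phi_pos _).trans_le (hg.mem_Icc y t ht).1)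
    ((phi_pos _).trans_le (hg.integral_mem_Icc hF y).1)

end IsGaussBounded

lemma MI_le_CSm {a : ℝ} {F : Measure ℝ} [IsProbabilityMeasure F] (hF : F (Icc (-a) a) = 1) :
    MI F (fun y t => φ (y - t)) ≤ CSm a :=
  le_csSup ⟨∫ y, gaussEnvelope a y * (y ^ 2 + 2 * a ^ 2), by
      rintro _ ⟨G, hG, hGa, rfl⟩
      exact IsGaussBounded.gauss.MI_le hGa⟩
    ⟨F, inferInstance, hF, rfl⟩

theorem onoff_capacity_upper_bound_general (E pon : ℝ)
    (hpon : pon ∈ Icc (0:ℝ) 1) :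
    sSup {x : ℝ | ∃ F : Measure ℝ, IsProbabilityMeasure F ∧
        F (Icc (-Real.sqrt E) (Real.sqrt E)) = 1 ∧
        x = MI F (fun y t => (1 - pon) * φ y + pon * φ (y - t))} ≤
      pon * CSm (Real.sqrt E) := by
  have hdirac : Measure.dirac (0 : ℝ) (Icc (-Real.sqrt E) (Real.sqrt E)) = 1 :=
    Measure.dirac_apply_of_mem ⟨neg_nonpos.2 (Real.sqrt_nonneg E), Real.sqrt_nonneg E⟩
  refine csSup_le ⟨_, _, inferInstance, hdirac, rfl⟩ ?_
  rintro _ ⟨F, hF, hFa, rfl⟩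
  calc MI F (fun y t => (1 - pon) * φ y + pon * φ (y - t))
      ≤ pon * MI F (fun y t => φ (y - t)) :=
        IsGaussBounded.noise.MI_mix_le IsGaussBounded.gauss hFa hpon
    _ ≤ pon * CSm (Real.sqrt E) := mul_le_mul_of_nonneg_left (MI_le_CSm hFa) hpon.1

/-- For the on-off channel, the capacity with causal transmitter side information is
upper bounded by `p_on · C_Sm(√E)`. -/
theorem onoff_capacity_upper_bound (E pon : ℝ) (hE : 0 ≤ E)
    (hpon : pon ∈ Icc (0:ℝ) 1) :
    sSup {x : ℝ | ∃ F : Measure ℝ, IsProbabilityMeasure F ∧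
        F (Icc (-Real.sqrt E) (Real.sqrt E)) = 1 ∧
        x = MI F (fun y t => (1 - pon) * φ y + pon * φ (y - t))} ≤
      pon * CSm (Real.sqrt E) :=
  onoff_capacity_upper_bound_general E pon hpon
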